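/- arXiv:1310.2500 — 4 statements merged into one kernel-verified Lean document; each statement's English description precedes it below -/
import Mathlib

section
/- Let f₁, f₂, f₃ be an ℝ-basis of Euclidean space ℝ³ and let L be its ℤ-span (the Bravais lattice generated by f₁, f₂, f₃). Let n ∈ ℝ³ be nonzero and suppose the plane with normal n is rational, i.e. the inner product ⟨n, fⱼ⟩ is an integer for each j = 1, 2, 3. Then there exist vectors g₁, g₂, g₃ ∈ ℝ³ that are linearly independent over ℝ, whose ℤ-span equals L, and which satisfy g₃ = f₃ and ⟨n, g₂⟩ = 0. -/
open RealInnerProductSpace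

/-!
Write `mⱼ = ⟪n, fⱼ⟫ ∈ ℤ`. Dividing `(m₀, m₁)` by its gcd gives a coprime pair `(a, b)`
with `a m₁ = b m₀`, so `a f₁ - b f₀` is orthogonal to `n`. Bézout `x a + y b = 1` completes it to
the unimodular change of basis `(f₀, f₁) ↦ (x f₀ + y f₁, a f₁ - b f₀)`, which preserves the
ℤ-span; a family with the same ℤ-span as a basis spans the space and so is again a basis.
-/

theorem Int.exists_isCoprime_mul_eq_mul (p q : ℤ) : ∃ a b : ℤ, IsCoprime a b ∧ a * q = b * p := by
  rcases (Int.gcd p q).eq_zero_or_pos with h | h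
  · obtain ⟨rfl, rfl⟩ := Int.gcd_eq_zero_iff.mp h
    exact ⟨1, 0, isCoprime_one_left, by simp⟩
  · obtain ⟨d, a, b, -, hab, rfl, rfl⟩ := Int.exists_gcd_one' h
    exact ⟨a, b, Int.isCoprime_iff_gcd_eq_one.mpr hab, by ring⟩

section IntSpan

variable {M : Type*} [AddCommGroup M]

theorem span_int_pair_eq_of_unimodular {u v : M} {a b x y : ℤ} (h : x * a + y * b = 1) :
    Submodule.span ℤ {x • u + y • v, a • v - b • u} = Submodule.span ℤ {u, v} := by
  apply le_antisymm <;> rw [Submodule.span_le, Set.insert_subset_iff, Set.singleton_subset_iff]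
  · exact ⟨Submodule.mem_span_pair.mpr ⟨x, y, rfl⟩, Submodule.mem_span_pair.mpr ⟨-b, a, by module⟩⟩
  · refine ⟨Submodule.mem_span_pair.mpr ⟨a, -y, ?_⟩, Submodule.mem_span_pair.mpr ⟨b, x, ?_⟩⟩
    · linear_combination (norm := module) h • u
    · linear_combination (norm := module) h • v

theorem span_int_range_eq_of_unimodular {u v w : M} {a b x y : ℤ} (h : x * a + y * b = 1) :
    Submodule.span ℤ (Set.range ![x • u + y • v, a • v - b • u, w])
      = Submodule.span ℤ (Set.range ![u, v, w]) := by
  simp only [Matrix.range_cons, Matrix.range_empty, Set.union_empty]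
  rw [← Set.union_assoc, ← Set.union_assoc, Set.singleton_union, Set.singleton_union,
    Submodule.span_union, Submodule.span_union, span_int_pair_eq_of_unimodular h]

end IntSpan

theorem Module.Basis.linearIndependent_of_span_int_eq {K V ι : Type*} [DivisionRing K]
    [AddCommGroup V] [Module K V] [Fintype ι] (f : Module.Basis ι K V) {g : ι → V}
    (h : Submodule.span ℤ (Set.range g) = Submodule.span ℤ (Set.range f)) :
    LinearIndependent K g := by
  refine linearIndependent_of_top_le_span_of_card_eq_finrank ?_ (Module.finrank_eq_card_basis f).symm
  rw [← Submodule.span_span_of_tower ℤ K, h, Submodule.span_span_of_tower, f.span_eq]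

theorem bravais_lattice_basis_with_one_vector_in_plane_general
    (f : Module.Basis (Fin 3) ℝ (EuclideanSpace ℝ (Fin 3)))
    (n : EuclideanSpace ℝ (Fin 3))
    (hrat : ∀ j : Fin 3, ∃ m : ℤ, ⟪n, f j⟫ = (m : ℝ)) :
    ∃ g : Fin 3 → EuclideanSpace ℝ (Fin 3),
      LinearIndependent ℝ g ∧
      Submodule.span ℤ (Set.range g)
        = Submodule.span ℤ (Set.range (f : Fin 3 → EuclideanSpace ℝ (Fin 3))) ∧
      g 2 = f 2 ∧ ⟪n, g 1⟫ = 0 := by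
  obtain ⟨m₀, hm₀⟩ := hrat 0
  obtain ⟨m₁, hm₁⟩ := hrat 1
  obtain ⟨a, b, ⟨x, y, hxy⟩, hab⟩ := Int.exists_isCoprime_mul_eq_mul m₀ m₁
  have hf : (f : Fin 3 → EuclideanSpace ℝ (Fin 3)) = ![f 0, f 1, f 2] := by
    ext1 i; fin_cases i <;> rfl
  have hspan : Submodule.span ℤ (Set.range ![x • f 0 + y • f 1, a • f 1 - b • f 0, f 2])
      = Submodule.span ℤ (Set.range f) := by
    rw [hf]; exact span_int_range_eq_of_unimodular hxy
  refine ⟨_, f.linearIndependent_of_span_int_eq hspan, hspan, rfl, ?_⟩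
  have habR : (a : ℝ) * m₁ = b * m₀ := by exact_mod_cast hab
  simp only [Matrix.cons_val_one, Matrix.cons_val_zero, inner_sub_right, ← Int.cast_smul_eq_zsmul ℝ,
    real_inner_smul_right, hm₀, hm₁, habR, sub_self]

/-- A Bravais lattice in ℝ³ with a rational plane (normal `n`) admits an
equivalent set of lattice vectors `g` with `g₃ = f₃` and `g₂ ⊥ n`. -/
theorem bravais_lattice_basis_with_one_vector_in_plane
    (f : Module.Basis (Fin 3) ℝ (EuclideanSpace ℝ (Fin 3)))
    (n : EuclideanSpace ℝ (Fin 3)) (hn : n ≠ 0)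
    (hrat : ∀ j : Fin 3, ∃ m : ℤ, ⟪n, f j⟫ = (m : ℝ)) :
    ∃ g : Fin 3 → EuclideanSpace ℝ (Fin 3),
      LinearIndependent ℝ g ∧
      Submodule.span ℤ (Set.range g)
        = Submodule.span ℤ (Set.range (f : Fin 3 → EuclideanSpace ℝ (Fin 3))) ∧
      g 2 = f 2 ∧ ⟪n, g 1⟫ = 0 :=
  bravais_lattice_basis_with_one_vector_in_plane_general f n hrat
end

section
/- Let f₁, f₂, f₃ be an ℝ-basis of Euclidean space ℝ³ and let L be its ℤ-span (the Bravais lattice generated by f₁, f₂, f₃). Let n ∈ ℝ³ be nonzero and suppose the plane with normal n is rational, i.e. the inner product ⟨n, fⱼ⟩ is an integer for each j = 1, 2, 3. Then there exist vectors h₁, h₂, h₃ ∈ ℝ³ that are linearly independent over ℝ, whose ℤ-span equals L, and which satisfy ⟨n, h₂⟩ = 0 and ⟨n, h₃⟩ = 0; that is, the lattice admits a unit cell with one face parallel to the given plane. -/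
/-!
Writing `m j := ⟪n, f j⟫ ∈ ℤ`, the coordinate map `c ↦ ∑ cⱼ fⱼ` identifies `ℤ³` with the lattice
and turns `⟪n, ·⟫` into the integer linear form `θ c = ∑ cⱼ mⱼ`. Since `ℤ` is a PID, the image of
`θ` is generated by some `θ x`, and then `ℤ³ = ℤ x ⊕ ker θ`. Completing `x` by a basis of the free
module `ker θ` gives a basis of `ℤ³` whose last two vectors lie in `ker θ`; their images in the
lattice are orthogonal to `n`, and the three images are `ℝ`-independent because they still span
the lattice, hence `ℝ³`.
-/

open Module Submodule RealInnerProductSpace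

section PID

variable {R M : Type*} [CommRing R] [IsDomain R] [IsPrincipalIdealRing R]
  [AddCommGroup M] [Module R M]

theorem LinearMap.exists_isCompl_span_singleton_ker (θ : M →ₗ[R] R) (hθ : θ ≠ 0) :
    ∃ x, θ x ≠ 0 ∧ IsCompl (R ∙ x) (LinearMap.ker θ) := by
  obtain ⟨d, hd⟩ := (IsPrincipalIdealRing.principal (LinearMap.range θ)).principal
  obtain ⟨x, rfl⟩ : d ∈ LinearMap.range θ := hd ▸ mem_span_singleton_self d
  have hx : θ x ≠ 0 := fun h ↦ hθ <| LinearMap.range_eq_bot.mp <| by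
    rw [hd, h, span_singleton_eq_bot]
  refine ⟨x, hx, disjoint_def.mpr ?_, codisjoint_iff_exists_add_eq.mpr fun z ↦ ?_⟩
  · rintro _ hy hyθ
    obtain ⟨c, rfl⟩ := mem_span_singleton.mp hy
    rw [LinearMap.mem_ker, map_smul, smul_eq_mul, mul_eq_zero] at hyθ
    rw [hyθ.resolve_right hx, zero_smul]
  · obtain ⟨c, hc⟩ := mem_span_singleton.mp (hd ▸ LinearMap.mem_range_self θ z)
    refine ⟨c • x, z - c • x, smul_mem _ c (mem_span_singleton_self x), ?_, add_sub_cancel _ _⟩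
    rw [LinearMap.mem_ker, map_sub, map_smul, hc, sub_self]

variable [Module.Free R M] [Module.Finite R M]

theorem Module.exists_basis_fin_succ_mem_of_isCompl {k : ℕ} (hk : finrank R M = k + 1)
    {x : M} (hx : x ≠ 0) {K : Submodule R M} (hxK : IsCompl (R ∙ x) K) :
    ∃ b : Basis (Fin (k + 1)) R M, ∀ i : Fin k, b i.succ ∈ K := by
  obtain ⟨r, bK⟩ : Σ r, Basis (Fin r) R K := ⟨_, Module.finBasis R K⟩
  have hli : LinearIndependent R (Fin.cons x (K.subtype ∘ bK) : Fin (r + 1) → M) := by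
    refine .finCons' x _ (bK.linearIndependent.map' _ K.ker_subtype) fun c y hy hcy ↦ ?_
    have hyK : y ∈ K := span_le.mpr (Set.range_subset_iff.mpr fun i ↦ (bK i).2) hy
    have hcx : c • x ∈ K := eq_neg_of_add_eq_zero_left hcy ▸ K.neg_mem hyK
    have hcx0 : c • x = 0 :=
      disjoint_def.mp hxK.disjoint _ (smul_mem _ c (mem_span_singleton_self x)) hcx
    exact (smul_eq_zero.mp hcx0).resolve_right hx
  have hspan : ⊤ ≤ span R (Set.range (Fin.cons x (K.subtype ∘ bK) : Fin (r + 1) → M)) := by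
    rw [Fin.range_cons, span_insert, Set.range_comp, ← map_span, bK.span_eq,
      Submodule.map_top, range_subtype]
    exact hxK.codisjoint.top_le
  obtain rfl : r = k := by
    simpa using (finrank_eq_card_basis (Basis.mk hli hspan)).symm.trans hk
  exact ⟨Basis.mk hli hspan, fun i ↦ by simp⟩

theorem LinearMap.exists_basis_fin_succ_map_succ_eq_zero (θ : M →ₗ[R] R) {k : ℕ}
    (hk : finrank R M = k + 1) : ∃ b : Basis (Fin (k + 1)) R M, ∀ i : Fin k, θ (b i.succ) = 0 := by
  by_cases hθ : θ = 0
  · exact ⟨finBasisOfFinrankEq R M hk, fun i ↦ by simp [hθ]⟩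
  obtain ⟨x, hx, hxK⟩ := θ.exists_isCompl_span_singleton_ker hθ
  exact exists_basis_fin_succ_mem_of_isCompl hk (by rintro rfl; exact hx (map_zero θ)) hxK

end PID

theorem Submodule.span_range_linearCombination_comp_basis {S N ι κ : Type*} [CommSemiring S]
    [AddCommMonoid N] [Module S N] [Fintype ι] (f : ι → N) (b : Basis κ S (ι → S)) :
    span S (Set.range (Fintype.linearCombination S f ∘ b)) = span S (Set.range f) := by
  rw [Set.range_comp, ← map_span, b.span_eq, Submodule.map_top, Fintype.range_linearCombination]

theorem Module.Basis.linearIndependent_of_span_eq {S K V ι : Type*} [CommSemiring S]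
    [DivisionRing K] [AddCommGroup V] [Module K V] [Module S V] [Algebra S K]
    [IsScalarTower S K V] [Fintype ι] (f : Basis ι K V) {h : ι → V}
    (hspan : span S (Set.range h) = span S (Set.range f)) : LinearIndependent K h := by
  refine linearIndependent_of_top_le_span_of_card_eq_finrank ?_ (finrank_eq_card_basis f).symm
  rw [← span_span_of_tower S, hspan, span_span_of_tower, f.span_eq]

theorem inner_fintypeLinearCombination_int {E ι : Type*} [NormedAddCommGroup E]
    [InnerProductSpace ℝ E] [Fintype ι] {n : E} {f : ι → E} {m : ι → ℤ}
    (hm : ∀ i, ⟪n, f i⟫ = m i) (c : ι → ℤ) :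
    ⟪n, Fintype.linearCombination ℤ f c⟫ = Fintype.linearCombination ℤ m c := by
  simp [Fintype.linearCombination_apply, inner_sum, ← Int.cast_smul_eq_zsmul ℝ,
    real_inner_smul_right, hm]

theorem bravais_lattice_basis_with_face_parallel_to_plane_general
    (f : Module.Basis (Fin 3) ℝ (EuclideanSpace ℝ (Fin 3)))
    (n : EuclideanSpace ℝ (Fin 3))
    (hrat : ∀ j : Fin 3, ∃ m : ℤ, ⟪n, f j⟫ = (m : ℝ)) :
    ∃ h : Fin 3 → EuclideanSpace ℝ (Fin 3),
      LinearIndependent ℝ h ∧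
      Submodule.span ℤ (Set.range h)
        = Submodule.span ℤ (Set.range (f : Fin 3 → EuclideanSpace ℝ (Fin 3))) ∧
      ⟪n, h 1⟫ = 0 ∧ ⟪n, h 2⟫ = 0 := by
  choose m hm using hrat
  obtain ⟨b, hb⟩ := (Fintype.linearCombination ℤ m).exists_basis_fin_succ_map_succ_eq_zero
    (by simp : finrank ℤ (Fin 3 → ℤ) = 2 + 1)
  have hspan := span_range_linearCombination_comp_basis (f : Fin 3 → _) b
  refine ⟨_, f.linearIndependent_of_span_eq hspan, hspan, ?_, ?_⟩
  · exact (inner_fintypeLinearCombination_int hm _).trans (mod_cast hb 0)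
  · exact (inner_fintypeLinearCombination_int hm _).trans (mod_cast hb 1)

/-- A Bravais lattice in ℝ³ with a rational plane (normal `n`) admits an
equivalent set of lattice vectors `h` with `h₂ ⊥ n` and `h₃ ⊥ n`:
a unit cell with one face parallel to the plane. -/
theorem bravais_lattice_basis_with_face_parallel_to_plane
    (f : Module.Basis (Fin 3) ℝ (EuclideanSpace ℝ (Fin 3)))
    (n : EuclideanSpace ℝ (Fin 3)) (hn : n ≠ 0)
    (hrat : ∀ j : Fin 3, ∃ m : ℤ, ⟪n, f j⟫ = (m : ℝ)) :
    ∃ h : Fin 3 → EuclideanSpace ℝ (Fin 3),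
      LinearIndependent ℝ h ∧
      Submodule.span ℤ (Set.range h)
        = Submodule.span ℤ (Set.range (f : Fin 3 → EuclideanSpace ℝ (Fin 3))) ∧
      ⟪n, h 1⟫ = 0 ∧ ⟪n, h 2⟫ = 0 :=
  bravais_lattice_basis_with_face_parallel_to_plane_general f n hrat
end

section
/- Fix ρ₀ > 0, l > 0 and a positive integer n, and set L = n·l. For the one-dimensional charge density ρ(x) = ρ₀ sin(2π x / l), the total effective surface charge at the right end of the bar — the sum of the partial-cell charge ∫_{L−l+a}^{L} ρ(x) dx and the polarization-termination charge p(a) = (1/l) ∫_a^{a+l} x ρ(x) dx — equals the constant −ρ₀ l / (2π) for every a ∈ [0, l]; in particular it is independent of the choice a of unit cell, even though each summand separately depends on a. -/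
/-!
Moving the unit cell from `(0, l)` to `(a, a + l)` transports the piece `(0, a)` by `l`, so for an
`l`-periodic density the cell's dipole moment grows by `l ∫₀ᵃ ρ`, i.e. `p(a) = p(0) + ∫₀ᵃ ρ`.
By periodicity the partial cell at the right end carries `∫ₐˡ ρ`, which loses exactly `∫₀ᵃ ρ`.
The sum is therefore `∫₀ˡ ρ + p(0)`, which for `ρ₀ sin (2πx/l)` is `0 - ρ₀ l / (2π)`.
-/

open Real Function intervalIntegral

noncomputable def polarization (ρ : ℝ → ℝ) (l a : ℝ) : ℝ :=
  (1 / l) * ∫ x in a..a + l, x * ρ x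

theorem Function.Periodic.intervalIntegral_add_period {ρ : ℝ → ℝ} {T : ℝ} (hρ : Periodic ρ T)
    (a b : ℝ) : ∫ x in a + T..b + T, ρ x = ∫ x in a..b, ρ x := by
  rw [← integral_comp_add_right]
  exact integral_congr fun x _ => hρ x

theorem integral_window_eq {g : ℝ → ℝ} (hg : Continuous g) (a T : ℝ) :
    ∫ x in a..a + T, g x = (∫ x in 0..T, g x) + ∫ x in 0..a, (g (x + T) - g x) := by
  have hshift : Continuous fun x => g (x + T) := hg.comp (continuous_add_const T)
  rw [integral_sub (hshift.intervalIntegrable 0 a) (hg.intervalIntegrable 0 a),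
    integral_comp_add_right, zero_add]
  have h₁ : (∫ x in 0..a, g x) + ∫ x in a..a + T, g x = ∫ x in 0..a + T, g x :=
    integral_add_adjacent_intervals (hg.intervalIntegrable _ _) (hg.intervalIntegrable _ _)
  have h₂ : (∫ x in 0..T, g x) + ∫ x in T..a + T, g x = ∫ x in 0..a + T, g x :=
    integral_add_adjacent_intervals (hg.intervalIntegrable _ _) (hg.intervalIntegrable _ _)
  linarith

section Periodic

variable {ρ : ℝ → ℝ} {l : ℝ}

theorem Function.Periodic.polarization_eq (hρ : Periodic ρ l) (hc : Continuous ρ) (hl : l ≠ 0)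
    (a : ℝ) : polarization ρ l a = polarization ρ l 0 + ∫ x in 0..a, ρ x := by
  have hmoment : ∀ x, (x + l) * ρ (x + l) - x * ρ x = l * ρ x := fun x => by rw [hρ]; ring
  simp only [polarization, integral_window_eq (by fun_prop : Continuous fun x => x * ρ x) a l,
    hmoment, integral_const_mul, zero_add]
  field_simp

theorem Function.Periodic.integral_partial_cell_eq (hρ : Periodic ρ l) (n : ℤ) (a : ℝ) :
    ∫ x in n * l - l + a..n * l, ρ x = ∫ x in a..l, ρ x := by
  rw [← (hρ.int_mul (n - 1)).intervalIntegral_add_period a l]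
  congr 1 <;> push_cast <;> ring

theorem Function.Periodic.right_end_charge_eq (hρ : Periodic ρ l) (hc : Continuous ρ)
    (hl : l ≠ 0) (n : ℤ) (a : ℝ) :
    (∫ x in n * l - l + a..n * l, ρ x) + polarization ρ l a
      = (∫ x in 0..l, ρ x) + polarization ρ l 0 := by
  rw [hρ.integral_partial_cell_eq, hρ.polarization_eq hc hl,
    ← integral_add_adjacent_intervals (hc.intervalIntegrable 0 a) (hc.intervalIntegrable a l)]
  ring

end Periodic

section Sine

variable {l : ℝ}

theorem integral_sin_two_pi_mul_div (hl : l ≠ 0) : ∫ x in 0..l, sin (2 * π * x / l) = 0 := by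
  simp only [mul_div_right_comm (2 * π)]
  rw [integral_comp_mul_left (fun x => sin x) (by positivity : 2 * π / l ≠ 0), integral_sin,
    div_mul_cancel₀ _ hl, mul_zero, cos_zero, cos_two_pi, sub_self, smul_zero]

theorem hasDerivAt_sin_div_sq_sub_mul_cos_div {ω : ℝ} (hω : ω ≠ 0) (x : ℝ) :
    HasDerivAt (fun y => sin (ω * y) / ω ^ 2 - y * cos (ω * y) / ω) (x * sin (ω * x)) x := by
  have hlin : HasDerivAt (fun y => ω * y) ω x := by simpa using (hasDerivAt_id x).const_mul ω
  refine ((hlin.sin.div_const (ω ^ 2)).sub (((hasDerivAt_id x).mul hlin.cos).div_const ω)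
    ).congr_deriv ?_
  simp only [id]
  field_simp
  ring

theorem integral_mul_sin_two_pi_mul_div (hl : l ≠ 0) :
    ∫ x in 0..l, x * sin (2 * π * x / l) = -(l ^ 2 / (2 * π)) := by
  have hω : 2 * π / l ≠ 0 := by positivity
  simp only [mul_div_right_comm (2 * π)]
  rw [integral_eq_sub_of_hasDerivAt (fun x _ => hasDerivAt_sin_div_sq_sub_mul_cos_div hω x)
    ((by fun_prop : Continuous fun x => x * sin (2 * π / l * x)).intervalIntegrable _ _)]
  simp only [div_mul_cancel₀ _ hl, mul_zero, sin_two_pi, cos_two_pi, sin_zero, cos_zero]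
  field_simp
  ring

end Sine

theorem total_right_end_charge_independent_of_unit_cell_general
    (ρ₀ l : ℝ) (hl : 0 < l) (n : ℕ)
    (L : ℝ) (hL : L = n * l) :
    ∀ a ∈ Set.Icc (0 : ℝ) l,
      (∫ x in (L - l + a)..L, ρ₀ * Real.sin (2 * Real.pi * x / l))
        + (1 / l) * (∫ x in a..(a + l), x * (ρ₀ * Real.sin (2 * Real.pi * x / l)))
        = -(ρ₀ * l / (2 * Real.pi)) := by
  intro a _
  set ρ : ℝ → ℝ := fun x => ρ₀ * sin (2 * π * x / l)
  have hρ : Periodic ρ l := fun x => by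
    simp only [ρ, mul_add, add_div, mul_div_cancel_right₀ _ hl.ne', sin_add_two_pi]
  have hcharge := hρ.right_end_charge_eq (by fun_prop) hl.ne' n a
  rw [Int.cast_natCast, ← hL] at hcharge
  calc _ = (∫ x in L - l + a..L, ρ x) + polarization ρ l a := rfl
    _ = (∫ x in 0..l, ρ x) + polarization ρ l 0 := hcharge
    _ = -(ρ₀ * l / (2 * π)) := by
      simp only [ρ, polarization, zero_add, mul_left_comm _ ρ₀, integral_const_mul,
        integral_sin_two_pi_mul_div hl.ne', integral_mul_sin_two_pi_mul_div hl.ne']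
      field_simp
      ring

/-- The total effective surface charge at the right end of the bar (partial-cell
charge plus polarization-termination charge) is independent of the choice `a` of
unit cell. -/
theorem total_right_end_charge_independent_of_unit_cell
    (ρ₀ l : ℝ) (hρ₀ : 0 < ρ₀) (hl : 0 < l) (n : ℕ) (hn : 0 < n)
    (L : ℝ) (hL : L = n * l) :
    ∀ a ∈ Set.Icc (0 : ℝ) l,
      (∫ x in (L - l + a)..L, ρ₀ * Real.sin (2 * Real.pi * x / l))
        + (1 / l) * (∫ x in a..(a + l), x * (ρ₀ * Real.sin (2 * Real.pi * x / l)))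
        = -(ρ₀ * l / (2 * Real.pi)) :=
  total_right_end_charge_independent_of_unit_cell_general ρ₀ l hl n L hL
end

section
/- Let l > 0 and let ρ : ℝ → ℝ be continuous, periodic with period l, and with zero mean over one period: ∫_0^l ρ(x) dx = 0. Define the unit-cell polarization p(a) = (1/l) ∫_a^{a+l} x ρ(x) dx. Then for every a ∈ ℝ, p(a) − p(0) = ∫_0^a ρ(x) dx; that is, the change in polarization under a shift of the unit cell equals the charge transferred past the cell boundary. -/
/-- For a continuous `l`-periodic charge-neutral density, the change in
unit-cell polarization under a shift of the unit cell equals the charge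
transferred past the cell boundary. -/
theorem polarization_shift_eq_transferred_charge
    (l : ℝ) (hl : 0 < l) (ρ : ℝ → ℝ) (hcont : Continuous ρ)
    (hper : ∀ x, ρ (x + l) = ρ x)
    (hneutral : ∫ x in (0 : ℝ)..l, ρ x = 0) :
    ∀ a : ℝ,
      (1 / l) * (∫ x in a..(a + l), x * ρ x)
        - (1 / l) * (∫ x in (0 : ℝ)..(0 + l), x * ρ x)
        = ∫ x in (0 : ℝ)..a, ρ x := by
  intro a
  have hint : ∀ u v : ℝ, IntervalIntegrable (fun x => x * ρ x) MeasureTheory.volume u v :=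
    fun u v => (continuous_id.mul hcont).intervalIntegrable u v
  have h1 : (∫ x in (0:ℝ)..l, x * ρ x) + ∫ x in l..(a+l), x * ρ x
      = ∫ x in (0:ℝ)..(a+l), x * ρ x :=
    intervalIntegral.integral_add_adjacent_intervals (hint 0 l) (hint l (a+l))
  have h2 : (∫ x in (0:ℝ)..a, x * ρ x) + ∫ x in a..(a+l), x * ρ x
      = ∫ x in (0:ℝ)..(a+l), x * ρ x :=
    intervalIntegral.integral_add_adjacent_intervals (hint 0 a) (hint a (a+l))
  have h3 : ∫ x in (0:ℝ)..a, (x + l) * ρ (x + l) = ∫ x in l..(a+l), x * ρ x := by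
    have := intervalIntegral.integral_comp_add_right (a := (0:ℝ)) (b := a)
      (fun x => x * ρ x) l
    simpa using this
  have h4 : ∫ x in (0:ℝ)..a, (x + l) * ρ (x + l)
      = (∫ x in (0:ℝ)..a, x * ρ x) + l * ∫ x in (0:ℝ)..a, ρ x := by
    have : ∀ x, (x + l) * ρ (x + l) = x * ρ x + l * ρ x := by
      intro x; rw [hper]; ring
    rw [intervalIntegral.integral_congr (fun x _ => this x),
      intervalIntegral.integral_add (hint 0 a)
        ((hcont.intervalIntegrable 0 a).const_mul l),
      intervalIntegral.integral_const_mul]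
  have key : (∫ x in a..(a+l), x * ρ x) - (∫ x in (0:ℝ)..l, x * ρ x)
      = l * ∫ x in (0:ℝ)..a, ρ x := by
    have := h3.symm.trans h4
    linarith [h1, h2]
  rw [zero_add]
  field_simp
  linarith [key]
end
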